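/- For 1 ≤ j ≤ n-2 and A = [j-1]∪{j+1}, the hyperplane H: x_1+...+x_j = binom(j+1,2)+1 splits the vertex set of Π_n into Bruhat intervals: the permutations σ with σ(1)+...+σ(j) ≤ binom(j+1,2)+1 form exactly the interval [e, ←A·ω_A], and those with σ(1)+...+σ(j) ≥ binom(j+1,2)+1 form exactly the interval [→A·e_A, ω]. -/

import Mathlib

/-!
Both halves are proved by walking along Bruhat covers. A cover `u ⋖ u * swap p q` with `p < q`
has `u p < u q`, so `firstSum · j` is monotone for the Bruhat order; as
`firstSum τmin j = firstSum τmax j = j (j + 1) / 2 + 1`, each interval lies in its half-space.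

Conversely, split the positions into the blocks `[0, j)` and `[j, n)`. If
`firstSum σ j ≤ j (j + 1) / 2 + 1` and `σ ≠ τmax`, then `σ` has an upper cover on the same side:
an ascent inside a block is removed by an adjacent transposition without changing the sum, and a
permutation decreasing on both blocks is either `τmax` or the block reversal of the identity, in
which exchanging the values `j - 1` and `j` crosses the hyperplane. Dually, if the sum is at least
`j (j + 1) / 2 + 1` and `σ ≠ τmin`, a descent inside a block gives a lower cover on the same side;
a permutation increasing on both blocks is `τmin` when the sum equals the bound, and otherwise
some value `v + 1` of the first block with `v` in the second can be exchanged, lowering the sum by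
one. Since a cover raises the length by one these walks terminate, at `τmax` and `τmin`, and in
the same way at `1` and `Fin.revPerm`. Permutations decreasing on both blocks are reduced to
increasing ones by composing with the reversal of each block.
-/

/-- Number of inversions (Coxeter length) of a permutation of `Fin n`. -/
def invCount {n : ℕ} (σ : Equiv.Perm (Fin n)) : ℕ :=
  ((Finset.univ : Finset (Fin n × Fin n)).filter
    (fun p => p.1 < p.2 ∧ σ p.2 < σ p.1)).card

/-- Covering relation of the strong Bruhat order: multiply by a transposition
(on values) and increase the length by exactly one. -/
def BruhatCover {n : ℕ} (u v : Equiv.Perm (Fin n)) : Prop :=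
  (∃ a b : Fin n, a ≠ b ∧ v = Equiv.swap a b * u) ∧ invCount v = invCount u + 1

/-- The strong Bruhat order on `Equiv.Perm (Fin n)`. -/
def BruhatLE {n : ℕ} : Equiv.Perm (Fin n) → Equiv.Perm (Fin n) → Prop :=
  Relation.ReflTransGen BruhatCover

/-- Sum of the first `j` one-line values of `σ` (values taken in `{1, …, n}`). -/
def firstSum {n : ℕ} (σ : Equiv.Perm (Fin n)) (j : ℕ) : ℕ :=
  ∑ i ∈ Finset.univ.filter (fun i : Fin n => (i : ℕ) < j), ((σ i : ℕ) + 1)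

open Equiv Finset
open Set (BijOn MapsTo)

section Inversions

variable {n : ℕ}

def invSet (w : Perm (Fin n)) : Finset (Fin n × Fin n) :=
  Finset.univ.filter fun x => x.1 < x.2 ∧ w x.2 < w x.1

theorem mem_invSet {w : Perm (Fin n)} {x : Fin n × Fin n} :
    x ∈ invSet w ↔ x.1 < x.2 ∧ w x.2 < w x.1 := by
  simp [invSet]

/-- For `p < q` with `u p < u q` this involution maps the inversions of `u` to inversions of
`u * swap p q` other than `(p, q)`, and onto them when no `u r` with `p < r < q` lies between
`u p` and `u q`. -/
def pairSwap (p q : Fin n) (x : Fin n × Fin n) : Fin n × Fin n :=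
  if (p < x.1 ∧ x.1 < q) ∨ (p < x.2 ∧ x.2 < q) then x
  else (swap p q x.1, swap p q x.2)

theorem between_swap_apply_iff (p q a : Fin n) :
    (p < swap p q a ∧ swap p q a < q) ↔ (p < a ∧ a < q) := by
  rcases eq_or_ne a p with rfl | hap
  · simp
  rcases eq_or_ne a q with rfl | haq
  · simp
  · rw [swap_apply_of_ne_of_ne hap haq]

theorem pairSwap_involutive (p q : Fin n) : Function.Involutive (pairSwap p q) := by
  intro x
  unfold pairSwap
  by_cases h : (p < x.1 ∧ x.1 < q) ∨ (p < x.2 ∧ x.2 < q)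
  · rw [if_pos h, if_pos h]
  · rw [if_neg h, if_neg (by simpa only [between_swap_apply_iff] using h)]
    simp

theorem pairSwap_left_right (p q : Fin n) : pairSwap p q (p, q) = (q, p) := by
  simp [pairSwap]

theorem swap_apply_lt_swap_apply {p q a b : Fin n} (hpq : p < q) (hab : a < b)
    (ha : ¬(p < a ∧ a < q)) (hb : ¬(p < b ∧ b < q)) (hne : (a, b) ≠ (p, q)) :
    swap p q a < swap p q b := by
  simp only [ne_eq, Prod.mk.injEq] at hne
  rcases lt_trichotomy a p with hap | rfl | hpa
  · rw [swap_apply_of_ne_of_ne hap.ne (hap.trans hpq).ne]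
    rcases eq_or_ne b p with rfl | hbp
    · rw [swap_apply_left]; exact hap.trans hpq
    rcases eq_or_ne b q with rfl | hbq
    · rw [swap_apply_right]; exact hap
    · rw [swap_apply_of_ne_of_ne hbp hbq]; exact hab
  · have hqb : q < b := by
      rcases lt_trichotomy b q with h | rfl | h
      · exact absurd ⟨hab, h⟩ hb
      · exact absurd ⟨rfl, rfl⟩ hne
      · exact h
    rw [swap_apply_left, swap_apply_of_ne_of_ne (hpq.trans hqb).ne' hqb.ne']
    exact hqb
  · have hqb : q < b := lt_of_le_of_lt (le_of_not_gt fun h => ha ⟨hpa, h⟩) hab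
    rw [swap_apply_of_ne_of_ne (hpq.trans hqb).ne' hqb.ne']
    rcases eq_or_ne a q with rfl | haq
    · rw [swap_apply_right]; exact hpq.trans hqb
    · rw [swap_apply_of_ne_of_ne hpa.ne' haq]; exact hab

theorem pairSwap_mem_invSet_mul_swap {u : Perm (Fin n)} {p q : Fin n} (hpq : p < q)
    (hu : u p < u q) {x : Fin n × Fin n} (hx : x ∈ invSet u) :
    pairSwap p q x ∈ invSet (u * swap p q) := by
  obtain ⟨a, b⟩ := x
  rw [mem_invSet] at hx ⊢
  obtain ⟨hab, hinv⟩ := hx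
  simp only [Perm.mul_apply]
  unfold pairSwap
  by_cases hc : (p < a ∧ a < q) ∨ (p < b ∧ b < q)
  · rw [if_pos hc]
    refine ⟨hab, ?_⟩
    rcases hc with ⟨hpa, haq⟩ | ⟨hpb, hbq⟩
    · rw [swap_apply_of_ne_of_ne hpa.ne' haq.ne]
      rcases eq_or_ne b q with rfl | hbq
      · rw [swap_apply_right]; exact hu.trans hinv
      · rwa [swap_apply_of_ne_of_ne (hpa.trans hab).ne' hbq]
    · rw [swap_apply_of_ne_of_ne hpb.ne' hbq.ne]
      rcases eq_or_ne a p with rfl | hap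
      · rw [swap_apply_left]; exact hinv.trans hu
      · rwa [swap_apply_of_ne_of_ne hap (hab.trans hbq).ne]
  · rw [if_neg hc]
    have hne : (a, b) ≠ (p, q) := by
      rintro ⟨⟩
      exact absurd hinv (asymm hu)
    refine ⟨swap_apply_lt_swap_apply hpq hab (fun h => hc (.inl h)) (fun h => hc (.inr h)) hne,
      ?_⟩
    simpa only [swap_apply_self] using hinv

theorem pairSwap_mem_invSet {u : Perm (Fin n)} {p q : Fin n} (hpq : p < q)
    (hmid : ∀ r, p < r → r < q → u r < u p ∨ u q < u r) {x : Fin n × Fin n}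
    (hx : x ∈ invSet (u * swap p q)) (hne : x ≠ (p, q)) :
    pairSwap p q x ∈ invSet u := by
  obtain ⟨a, b⟩ := x
  rw [mem_invSet] at hx ⊢
  obtain ⟨hab, hinv⟩ := hx
  simp only [Perm.mul_apply] at hinv
  unfold pairSwap
  by_cases hc : (p < a ∧ a < q) ∨ (p < b ∧ b < q)
  · rw [if_pos hc]
    refine ⟨hab, ?_⟩
    rcases hc with ⟨hpa, haq⟩ | ⟨hpb, hbq⟩
    · rw [swap_apply_of_ne_of_ne hpa.ne' haq.ne] at hinv
      rcases eq_or_ne b q with rfl | hbq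
      · rw [swap_apply_right] at hinv
        exact (hmid a hpa haq).resolve_left (asymm hinv)
      · rwa [swap_apply_of_ne_of_ne (hpa.trans hab).ne' hbq] at hinv
    · rw [swap_apply_of_ne_of_ne hpb.ne' hbq.ne] at hinv
      rcases eq_or_ne a p with rfl | hap
      · rw [swap_apply_left] at hinv
        exact (hmid b hpb hbq).resolve_right (asymm hinv)
      · rwa [swap_apply_of_ne_of_ne hap (hab.trans hbq).ne] at hinv
  · rw [if_neg hc]
    exact ⟨swap_apply_lt_swap_apply hpq hab (fun h => hc (.inl h)) (fun h => hc (.inr h)) hne,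
      hinv⟩

theorem invCount_lt_invCount_mul_swap {u : Perm (Fin n)} {p q : Fin n} (hpq : p < q)
    (hu : u p < u q) : invCount u < invCount (u * swap p q) := by
  have hsub : insert (p, q) ((invSet u).image (pairSwap p q)) ⊆ invSet (u * swap p q) := by
    intro x hx
    rcases Finset.mem_insert.1 hx with rfl | hx
    · simpa [mem_invSet, hpq] using hu
    · obtain ⟨y, hy, rfl⟩ := Finset.mem_image.1 hx
      exact pairSwap_mem_invSet_mul_swap hpq hu hy
  have hnot : (p, q) ∉ (invSet u).image (pairSwap p q) := by
    intro hmem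
    obtain ⟨y, hy, hyx⟩ := Finset.mem_image.1 hmem
    rw [← pairSwap_involutive p q y, hyx, pairSwap_left_right, mem_invSet] at hy
    exact asymm hpq hy.1
  calc invCount u = #((invSet u).image (pairSwap p q)) :=
        (card_image_of_injective _ (pairSwap_involutive p q).injective).symm
    _ < #(insert (p, q) ((invSet u).image (pairSwap p q))) := by
        rw [card_insert_of_notMem hnot]; exact Nat.lt_succ_self _
    _ ≤ invCount (u * swap p q) := card_le_card hsub

theorem invCount_mul_swap {u : Perm (Fin n)} {p q : Fin n} (hpq : p < q) (hu : u p < u q)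
    (hmid : ∀ r, p < r → r < q → u r < u p ∨ u q < u r) :
    invCount (u * swap p q) = invCount u + 1 := by
  refine le_antisymm ?_ (invCount_lt_invCount_mul_swap hpq hu)
  have hsub : invSet (u * swap p q) ⊆ insert (p, q) ((invSet u).image (pairSwap p q)) := by
    intro x hx
    by_cases hne : x = (p, q)
    · exact hne ▸ Finset.mem_insert_self _ _
    · exact Finset.mem_insert_of_mem (Finset.mem_image.2
        ⟨_, pairSwap_mem_invSet hpq hmid hx hne, pairSwap_involutive p q x⟩)
  calc invCount (u * swap p q) ≤ #(insert (p, q) ((invSet u).image (pairSwap p q))) :=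
        card_le_card hsub
    _ ≤ #((invSet u).image (pairSwap p q)) + 1 := card_insert_le _ _
    _ ≤ invCount u + 1 := Nat.add_le_add_right card_image_le 1

theorem bruhatCover_mul_swap {u : Perm (Fin n)} {p q : Fin n} (hpq : p < q) (hu : u p < u q)
    (hmid : ∀ r, p < r → r < q → u r < u p ∨ u q < u r) :
    BruhatCover u (u * swap p q) :=
  ⟨⟨u p, u q, hu.ne, mul_swap_eq_swap_mul u p q⟩, invCount_mul_swap hpq hu hmid⟩

theorem lt_of_invCount_mul_swap_eq_succ {u : Perm (Fin n)} {p q : Fin n} (hpq : p < q)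
    (h : invCount (u * swap p q) = invCount u + 1) : u p < u q := by
  by_contra hle
  have hlt : (u * swap p q) p < (u * swap p q) q := by
    simp only [Perm.mul_apply, swap_apply_left, swap_apply_right]
    exact lt_of_le_of_ne (not_lt.1 hle) (u.injective.ne hpq.ne')
  have := invCount_lt_invCount_mul_swap hpq hlt
  rw [mul_swap_mul_self] at this
  omega

theorem invCount_le (w : Perm (Fin n)) : invCount w ≤ n * n := by
  unfold invCount
  simpa using card_filter_le (univ : Finset (Fin n × Fin n)) _

end Inversions

section Sequences

variable {n j : ℕ} {F : ℕ → ℕ}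

def StrictMonoOnBlocks (n j : ℕ) (F : ℕ → ℕ) : Prop :=
  ∀ i, i + 1 < n → i + 1 ≠ j → F i < F (i + 1)

theorem add_sub_le_of_lt_succ {a b : ℕ} (hab : a ≤ b)
    (h : ∀ i, a ≤ i → i < b → F i < F (i + 1)) : F a + (b - a) ≤ F b := by
  induction b, hab using Nat.le_induction with
  | base => simp
  | succ b hab ih =>
    have := h b hab (Nat.lt_succ_self b)
    have := ih fun i hai hib => h i hai (hib.trans (Nat.lt_succ_self b))
    omega

theorem sum_range_succ_id (j : ℕ) : ∑ i ∈ range j, (i + 1) = j * (j + 1) / 2 := by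
  have := sum_range_succ' (fun i => i) j
  rw [add_zero] at this
  rw [← this, sum_range_id, Nat.add_sub_cancel, mul_comm]

theorem sum_range_apply_add_one (h : ∀ i < j, i ≤ F i) :
    ∑ i ∈ range j, (F i + 1) = j * (j + 1) / 2 + ∑ i ∈ range j, (F i - i) := by
  rw [← sum_range_succ_id, ← sum_add_distrib]
  refine sum_congr rfl fun i hi => ?_
  have := h i (mem_range.1 hi)
  omega

theorem StrictMonoOnBlocks.le_apply (hmono : StrictMonoOnBlocks n j F) (hjn : j ≤ n) {i : ℕ}
    (hi : i < j) : i ≤ F i := by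
  have := add_sub_le_of_lt_succ (F := F) (Nat.zero_le i)
    fun k _ hk => hmono k (by omega) (by omega)
  omega

theorem StrictMonoOnBlocks.apply_le (hmono : StrictMonoOnBlocks n j F)
    (hF : MapsTo F (Set.Iio n) (Set.Iio n)) {i : ℕ} (hji : j ≤ i) (hi : i < n) : F i ≤ i := by
  have := add_sub_le_of_lt_succ (F := F) (show i ≤ n - 1 by omega)
    fun k hk _ => hmono k (by omega) (by omega)
  have : F (n - 1) < n := hF (show n - 1 < n by omega)
  omega

theorem le_apply_of_forall_lt_eq_self {b : ℕ} (hF : BijOn F (Set.Iio n) (Set.Iio n))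
    (hfix : ∀ i < b, F i = i) {i : ℕ} (hbi : b ≤ i) (hi : i < n) : b ≤ F i := by
  by_contra! h
  have := hF.injOn (show F i < n from hF.mapsTo (show i < n from hi)) (show i < n from hi)
    (hfix _ h)
  omega

theorem eq_self_of_strictMonoOnBlocks (hF : BijOn F (Set.Iio n) (Set.Iio n)) (hjn : j ≤ n)
    (hmono : StrictMonoOnBlocks n j F) (hsum : ∑ i ∈ range j, (F i + 1) ≤ j * (j + 1) / 2) :
    ∀ i < n, F i = i := by
  have hfirst : ∀ i < j, F i = i := by
    rw [sum_range_apply_add_one fun i => hmono.le_apply hjn] at hsum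
    have hzero := sum_eq_zero_iff.1 (show ∑ i ∈ range j, (F i - i) = 0 by omega)
    intro i hi
    have := hzero i (mem_range.2 hi)
    have := hmono.le_apply hjn hi
    omega
  intro i hi
  rcases lt_or_ge i j with hij | hji
  · exact hfirst i hij
  · have := add_sub_le_of_lt_succ (F := F) hji fun k hk _ => hmono k (by omega) (by omega)
    have := le_apply_of_forall_lt_eq_self hF hfirst le_rfl (show j < n by omega)
    have := hmono.apply_le hF.mapsTo hji hi
    omega

/-- The one-line notation of the simple transposition exchanging `j - 1` and `j`. -/
def tauMinSeq (j i : ℕ) : ℕ :=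
  if i < j - 1 then i else if i = j - 1 then j else if i = j then j - 1 else i

theorem eq_tauMinSeq_of_strictMonoOnBlocks (hF : BijOn F (Set.Iio n) (Set.Iio n))
    (hj : 1 ≤ j) (hjn : j + 2 ≤ n) (hmono : StrictMonoOnBlocks n j F)
    (hsum : ∑ i ∈ range j, (F i + 1) = j * (j + 1) / 2 + 1) :
    ∀ i < n, F i = tauMinSeq j i := by
  have hlow : ∀ i < j, i ≤ F i := fun i => hmono.le_apply (by omega)
  rw [sum_range_apply_add_one hlow, show j = j - 1 + 1 by omega, sum_range_succ,
    Nat.sub_add_cancel hj] at hsum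
  -- the excess `F i - i` is nondecreasing on the first block and sums to one
  have hexc_le : ∀ i < j - 1, F i - i ≤ F (j - 1) - (j - 1) := fun i hi => by
    have := add_sub_le_of_lt_succ (F := F) (show i ≤ j - 1 by omega)
      fun k _ hk => hmono k (by omega) (by omega)
    omega
  have hlast : F (j - 1) = j := by
    by_contra h
    have := hlow (j - 1) (by omega)
    have : ∑ i ∈ range (j - 1), (F i - i) = 0 :=
      sum_eq_zero fun i hi => by have := hexc_le i (mem_range.1 hi); omega
    omega
  have hfirst : ∀ i < j - 1, F i = i := fun i hi => by
    have := (sum_eq_zero_iff.1 (show ∑ i ∈ range (j - 1), (F i - i) = 0 by omega)) i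
      (mem_range.2 hi)
    have := hlow i (by omega)
    omega
  have hlow₂ : ∀ i, j ≤ i → i < n → j - 1 ≤ F i := fun i hji hi =>
    le_apply_of_forall_lt_eq_self hF hfirst (by omega) hi
  have hne₂ : ∀ i, j ≤ i → i < n → F i ≠ j := fun i hji hi h => by
    have := hF.injOn (show i < n from hi) (show j - 1 < n by omega) (h.trans hlast.symm)
    omega
  have hup₂ : ∀ i, j ≤ i → i < n → F i ≤ i := fun i hji hi => hmono.apply_le hF.mapsTo hji hi
  have hj : F j = j - 1 := by
    have := hlow₂ j le_rfl (by omega)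
    have := hne₂ j le_rfl (by omega)
    have := hup₂ j le_rfl (by omega)
    omega
  have hj' : F (j + 1) = j + 1 := by
    have := hmono j (by omega) (by omega)
    have := hne₂ (j + 1) (by omega) (by omega)
    have := hup₂ (j + 1) (by omega) (by omega)
    omega
  intro i hi
  unfold tauMinSeq
  split_ifs with h₁ h₂ h₃
  · exact hfirst i h₁
  · rw [h₂, hlast]
  · rw [h₃, hj]
  · have := add_sub_le_of_lt_succ (F := F) (show j + 1 ≤ i by omega)
      fun k hk _ => hmono k (by omega) (by omega)
    have := hup₂ i (by omega) hi
    omega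

theorem exists_apply_add_one_eq_of_ne (hF : BijOn F (Set.Iio n) (Set.Iio n)) (hjn : j ≤ n)
    (hmono : StrictMonoOnBlocks n j F) (hne : ∃ i < j, F i ≠ i) :
    ∃ p < j, ∃ q, j ≤ q ∧ q < n ∧ F q + 1 = F p := by
  have hex : ∃ i, i < j ∧ i < F i := by
    obtain ⟨i, hi, h⟩ := hne
    exact ⟨i, hi, lt_of_le_of_ne (hmono.le_apply hjn hi) (Ne.symm h)⟩
  obtain ⟨hm, hFm⟩ := Nat.find_spec hex
  set m := Nat.find hex
  have hbelow : ∀ k < m, F k = k := fun k hk => by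
    have := Nat.find_min hex hk
    have := hmono.le_apply hjn (show k < j by omega)
    omega
  -- the value `F m - 1` is missing from the first block
  obtain ⟨q, hq, hFq⟩ := hF.surjOn (show F m - 1 < n by
    have : F m < n := hF.mapsTo (show m < n by omega)
    omega)
  have hq : q < n := hq
  refine ⟨m, hm, q, ?_, hq, by omega⟩
  by_contra! hqj
  rcases lt_trichotomy q m with hqm | rfl | hmq
  · have := hbelow q hqm
    omega
  · omega
  · have := add_sub_le_of_lt_succ (F := F) hmq.le fun k _ hk => hmono k (by omega) (by omega)
    omega

/-- Reverses the blocks `[0, j)` and `[j, n)` separately. -/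
def blockRev (n j i : ℕ) : ℕ :=
  if i < j then j - 1 - i else n - 1 + j - i

theorem blockRev_blockRev {i : ℕ} (hi : i < n) :
    blockRev n j (blockRev n j i) = i := by
  unfold blockRev
  split_ifs <;> omega

theorem bijOn_blockRev (hjn : j ≤ n) : BijOn (blockRev n j) (Set.Iio n) (Set.Iio n) := by
  have hmaps : MapsTo (blockRev n j) (Set.Iio n) (Set.Iio n) := fun i (hi : i < n) => by
    show blockRev n j i < n
    unfold blockRev
    split_ifs <;> omega
  exact Set.InvOn.bijOn ⟨fun i hi => blockRev_blockRev hi,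
    fun i hi => blockRev_blockRev hi⟩ hmaps hmaps

theorem sum_range_comp_blockRev (G : ℕ → ℕ) :
    ∑ i ∈ range j, G (blockRev n j i) = ∑ i ∈ range j, G i := by
  rw [← sum_range_reflect G j]
  exact sum_congr rfl fun i hi => by simp [blockRev, mem_range.1 hi]

theorem strictMonoOnBlocks_of_forall_le (hF : Set.InjOn F (Set.Iio n))
    (h : ∀ i, i + 1 < n → i + 1 ≠ j → F i ≤ F (i + 1)) : StrictMonoOnBlocks n j F :=
  fun i hi hij => lt_of_le_of_ne (h i hi hij) fun heq => by
    have := hF (show i < n by omega) (show i + 1 < n from hi) heq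
    omega

theorem strictMonoOnBlocks_comp_blockRev (hF : Set.InjOn F (Set.Iio n)) (hjn : j ≤ n)
    (h : ∀ i, i + 1 < n → i + 1 ≠ j → F (i + 1) ≤ F i) :
    StrictMonoOnBlocks n j (F ∘ blockRev n j) := by
  refine strictMonoOnBlocks_of_forall_le
    (hF.comp (bijOn_blockRev hjn).injOn (bijOn_blockRev hjn).mapsTo) fun i hi hij => ?_
  have hrev : blockRev n j i = blockRev n j (i + 1) + 1 := by
    unfold blockRev
    split_ifs <;> omega
  have hrev' : blockRev n j (i + 1) + 1 < n ∧ blockRev n j (i + 1) + 1 ≠ j := by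
    unfold blockRev
    split_ifs <;> omega
  simp only [Function.comp_apply, hrev]
  exact h _ hrev'.1 hrev'.2

end Sequences

section OneLine

variable {n : ℕ}

/-- The one-line notation of `σ` as a sequence of naturals (with junk value `0` from `n` on). -/
def oneLine (σ : Perm (Fin n)) (i : ℕ) : ℕ :=
  if h : i < n then σ ⟨i, h⟩ else 0

theorem oneLine_of_lt (σ : Perm (Fin n)) {i : ℕ} (h : i < n) : oneLine σ i = σ ⟨i, h⟩ :=
  dif_pos h

@[simp]
theorem oneLine_val (σ : Perm (Fin n)) (i : Fin n) : oneLine σ i = σ i :=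
  dif_pos i.isLt

theorem bijOn_oneLine (σ : Perm (Fin n)) : BijOn (oneLine σ) (Set.Iio n) (Set.Iio n) := by
  refine ⟨fun i (hi : i < n) => ?_, fun a (ha : a < n) b (hb : b < n) hab => ?_,
    fun v (hv : v < n) => ⟨σ⁻¹ ⟨v, hv⟩, (σ⁻¹ ⟨v, hv⟩).isLt, by simp⟩⟩
  · simp [oneLine_of_lt σ hi]
  · rw [oneLine_of_lt σ ha, oneLine_of_lt σ hb, Fin.val_inj, σ.injective.eq_iff] at hab
    exact Fin.mk.inj_iff.1 hab

theorem eq_of_oneLine_eq {σ τ : Perm (Fin n)} (h : ∀ i < n, oneLine σ i = oneLine τ i) :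
    σ = τ := by
  ext i
  simpa using h i i.isLt

theorem eq_of_oneLine_blockRev_eq {σ τ : Perm (Fin n)} {j : ℕ} (hjn : j ≤ n)
    (h : ∀ i < n, oneLine σ (blockRev n j i) = oneLine τ (blockRev n j i)) : σ = τ :=
  eq_of_oneLine_eq fun i hi => by
    rw [← blockRev_blockRev hi]
    exact h _ ((bijOn_blockRev hjn).mapsTo (show i < n from hi))

theorem firstSum_eq_sum_range (σ : Perm (Fin n)) {j : ℕ} (hjn : j ≤ n) :
    firstSum σ j = ∑ i ∈ range j, (oneLine σ i + 1) := by
  have hrange : (range n).filter (· < j) = range j := by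
    ext i
    simp only [mem_filter, mem_range]
    omega
  rw [firstSum, sum_filter, ← hrange, sum_filter]
  simpa using Fin.sum_univ_eq_sum_range (fun i => if i < j then oneLine σ i + 1 else 0) n

theorem firstSum_mul_swap_of_iff (σ : Perm (Fin n)) {p q : Fin n} {j : ℕ}
    (h : (p : ℕ) < j ↔ (q : ℕ) < j) : firstSum (σ * swap p q) j = firstSum σ j := by
  refine sum_equiv (swap p q) (fun i => ?_) fun i _ => by simp
  rcases eq_or_ne i p with rfl | hip
  · simp [h]
  rcases eq_or_ne i q with rfl | hiq
  · simp [h]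
  · simp [swap_apply_of_ne_of_ne hip hiq]

theorem firstSum_mul_swap_of_lt_of_le (σ : Perm (Fin n)) {p q : Fin n} {j : ℕ}
    (hp : (p : ℕ) < j) (hq : j ≤ (q : ℕ)) :
    firstSum (σ * swap p q) j + σ p = firstSum σ j + σ q := by
  set s := univ.filter fun i : Fin n => (i : ℕ) < j
  have hps : p ∈ s := by simpa [s] using hp
  have hrest : ∑ i ∈ s.erase p, (((σ * swap p q) i : ℕ) + 1) =
      ∑ i ∈ s.erase p, ((σ i : ℕ) + 1) :=
    sum_congr rfl fun i hi => by
      obtain ⟨hip, hi⟩ := mem_erase.1 hi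
      have hiq : i ≠ q := by rintro rfl; exact absurd (mem_filter.1 hi).2 (by omega)
      rw [Perm.mul_apply, swap_apply_of_ne_of_ne hip hiq]
  rw [firstSum, firstSum, ← add_sum_erase _ _ hps, ← add_sum_erase _ _ hps, hrest]
  simp only [Perm.mul_apply, swap_apply_left]
  omega

theorem bruhatCover_mul_swap_of_val_eq_succ {σ : Perm (Fin n)} {p q : Fin n}
    (hq : (q : ℕ) = p + 1) (h : σ p < σ q) : BruhatCover σ (σ * swap p q) :=
  bruhatCover_mul_swap (by omega) h fun r hpr hrq => by omega

theorem bruhatCover_mul_swap_of_apply_eq_succ {σ : Perm (Fin n)} {p q : Fin n} (hpq : p < q)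
    (h : (σ q : ℕ) = σ p + 1) : BruhatCover σ (σ * swap p q) :=
  bruhatCover_mul_swap hpq (by omega) fun r hpr hrq => by
    have := σ.injective.ne hpr.ne'
    have := σ.injective.ne hrq.ne
    omega

theorem bruhatCover_mul_swap_succ {σ : Perm (Fin n)} {i : ℕ} (hi : i + 1 < n)
    (h : oneLine σ i < oneLine σ (i + 1)) :
    BruhatCover σ (σ * swap ⟨i, Nat.lt_of_succ_lt hi⟩ ⟨i + 1, hi⟩) := by
  rw [oneLine_of_lt σ (Nat.lt_of_succ_lt hi), oneLine_of_lt σ hi] at h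
  exact bruhatCover_mul_swap_of_val_eq_succ rfl h

theorem mul_swap_succ_bruhatCover {σ : Perm (Fin n)} {i : ℕ} (hi : i + 1 < n)
    (h : oneLine σ (i + 1) < oneLine σ i) :
    BruhatCover (σ * swap ⟨i, Nat.lt_of_succ_lt hi⟩ ⟨i + 1, hi⟩) σ := by
  rw [oneLine_of_lt σ (Nat.lt_of_succ_lt hi), oneLine_of_lt σ hi] at h
  have hcov := bruhatCover_mul_swap_of_val_eq_succ (σ := σ * swap ⟨i, _⟩ ⟨i + 1, hi⟩)
    (p := ⟨i, Nat.lt_of_succ_lt hi⟩) (q := ⟨i + 1, hi⟩) rfl (by simpa using h)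
  rwa [mul_swap_mul_self] at hcov

end OneLine

section BruhatOrder

variable {n : ℕ}

theorem firstSum_le_firstSum_mul_swap {u : Perm (Fin n)} {p q : Fin n} (hpq : p < q)
    (hlen : invCount (u * swap p q) = invCount u + 1) (j : ℕ) :
    firstSum u j ≤ firstSum (u * swap p q) j := by
  by_cases hcross : (p : ℕ) < j ∧ j ≤ (q : ℕ)
  · have := firstSum_mul_swap_of_lt_of_le u hcross.1 hcross.2
    have : u p < u q := lt_of_invCount_mul_swap_eq_succ hpq hlen
    omega
  · rw [firstSum_mul_swap_of_iff u (by omega)]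

theorem firstSum_le_of_bruhatCover {u v : Perm (Fin n)} (h : BruhatCover u v) (j : ℕ) :
    firstSum u j ≤ firstSum v j := by
  obtain ⟨⟨a, b, hab, rfl⟩, hlen⟩ := h
  have hv : swap a b * u = u * swap (u⁻¹ a) (u⁻¹ b) := by
    rw [mul_swap_eq_swap_mul]
    simp
  have hne : u⁻¹ a ≠ u⁻¹ b := u⁻¹.injective.ne hab
  rw [hv] at hlen ⊢
  rcases hne.lt_or_gt with hlt | hgt
  · exact firstSum_le_firstSum_mul_swap hlt hlen j
  · rw [swap_comm] at hlen ⊢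
    exact firstSum_le_firstSum_mul_swap hgt hlen j

theorem firstSum_le_of_bruhatLE {u v : Perm (Fin n)} (h : BruhatLE u v) (j : ℕ) :
    firstSum u j ≤ firstSum v j := by
  induction h with
  | refl => exact le_rfl
  | tail _ hc ih => exact ih.trans (firstSum_le_of_bruhatCover hc j)

theorem bruhatLE_of_exists_lower_cover {τ : Perm (Fin n)} {P : Perm (Fin n) → Prop}
    (h : ∀ σ, P σ → σ ≠ τ → ∃ σ', BruhatCover σ' σ ∧ P σ') {σ : Perm (Fin n)} (hσ : P σ) :
    BruhatLE τ σ := by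
  induction σ using (measure invCount).wf.induction with
  | h σ ih =>
    by_cases hτ : σ = τ
    · exact hτ ▸ Relation.ReflTransGen.refl
    obtain ⟨σ', hc, hP⟩ := h σ hσ hτ
    have := hc.2
    exact (ih σ' (show invCount σ' < invCount σ by omega) hP).tail hc

theorem bruhatLE_of_exists_upper_cover {τ : Perm (Fin n)} {P : Perm (Fin n) → Prop}
    (h : ∀ σ, P σ → σ ≠ τ → ∃ σ', BruhatCover σ σ' ∧ P σ') {σ : Perm (Fin n)} (hσ : P σ) :
    BruhatLE σ τ := by
  induction σ using (measure fun σ : Perm (Fin n) => n * n - invCount σ).wf.induction with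
  | h σ ih =>
    by_cases hτ : σ = τ
    · exact hτ ▸ Relation.ReflTransGen.refl
    obtain ⟨σ', hc, hP⟩ := h σ hσ hτ
    have := hc.2
    have := invCount_le σ'
    exact .head hc (ih σ' (show n * n - invCount σ' < n * n - invCount σ by omega) hP)

theorem one_bruhatLE (σ : Perm (Fin n)) : BruhatLE 1 σ := by
  refine bruhatLE_of_exists_lower_cover (P := fun _ => True) (fun σ _ hσ => ?_) trivial
  by_contra! h
  refine hσ (eq_of_oneLine_eq fun i hi => ?_)
  -- for `j = 0` the two blocks are `∅` and all of `[0, n)`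
  have hmono : StrictMonoOnBlocks n 0 (oneLine σ) :=
    strictMonoOnBlocks_of_forall_le (bijOn_oneLine σ).injOn fun i hi _ => by
      by_contra! hlt
      exact h _ (mul_swap_succ_bruhatCover hi hlt)
  rw [eq_self_of_strictMonoOnBlocks (bijOn_oneLine σ) (Nat.zero_le n) hmono (by simp) i hi,
    oneLine_of_lt 1 hi]
  rfl

theorem bruhatLE_revPerm (σ : Perm (Fin n)) : BruhatLE σ Fin.revPerm := by
  refine bruhatLE_of_exists_upper_cover (P := fun _ => True) (fun σ _ hσ => ?_) trivial
  by_contra! h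
  refine hσ (eq_of_oneLine_blockRev_eq (Nat.zero_le n) fun i hi => ?_)
  have hmono : StrictMonoOnBlocks n 0 (oneLine σ ∘ blockRev n 0) :=
    strictMonoOnBlocks_comp_blockRev (bijOn_oneLine σ).injOn (Nat.zero_le n) fun i hi _ => by
      by_contra! hlt
      exact h _ (bruhatCover_mul_swap_succ hi hlt)
  have := eq_self_of_strictMonoOnBlocks
    ((bijOn_oneLine σ).comp (bijOn_blockRev (Nat.zero_le n))) (Nat.zero_le n) hmono (by simp) i hi
  simp only [Function.comp_apply] at this
  rw [this, blockRev, if_neg (Nat.not_lt_zero i), oneLine_of_lt _ (by omega)]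
  simp only [Fin.revPerm_apply, Fin.val_rev]
  omega

end BruhatOrder

section Hyperplane

variable {n j : ℕ}

theorem sum_tauMinSeq (hj : 1 ≤ j) :
    ∑ i ∈ range j, (tauMinSeq j i + 1) = j * (j + 1) / 2 + 1 := by
  rw [sum_range_apply_add_one fun i _ => by unfold tauMinSeq; split_ifs <;> omega,
    sum_eq_single_of_mem (j - 1) (mem_range.2 (by omega))
      fun i hi hij => by have := mem_range.1 hi; unfold tauMinSeq; split_ifs <;> omega]
  simp only [tauMinSeq, lt_irrefl, if_false, if_true]
  omega

/-- `τmax` is `τmin` with both blocks reversed. -/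
theorem tauMinSeq_blockRev (hj : 1 ≤ j) {i : ℕ} (hi : i < n) :
    tauMinSeq j (blockRev n j i) =
      if i = 0 then j else if i < j then j - 1 - i else if i < n - 1 then n + j - 1 - i
      else j - 1 := by
  unfold tauMinSeq blockRev
  split_ifs <;> omega

theorem firstSum_eq_of_tauMinSeq (hj : 1 ≤ j) (hjn : j ≤ n) {τ : Perm (Fin n)}
    (hτ : ∀ i : Fin n, (τ i : ℕ) = tauMinSeq j i) : firstSum τ j = j * (j + 1) / 2 + 1 := by
  rw [firstSum_eq_sum_range τ hjn, ← sum_tauMinSeq hj]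
  exact sum_congr rfl fun i hi => by rw [oneLine_of_lt τ (by have := mem_range.1 hi; omega), hτ]

theorem firstSum_eq_of_tauMinSeq_blockRev (hj : 1 ≤ j) (hjn : j ≤ n) {τ : Perm (Fin n)}
    (hτ : ∀ i : Fin n, (τ i : ℕ) = tauMinSeq j (blockRev n j i)) :
    firstSum τ j = j * (j + 1) / 2 + 1 := by
  rw [firstSum_eq_sum_range τ hjn, ← sum_range_comp_blockRev, ← sum_tauMinSeq hj]
  refine sum_congr rfl fun i hi => ?_
  have hi : i < n := by have := mem_range.1 hi; omega
  rw [oneLine_of_lt τ ((bijOn_blockRev hjn).mapsTo (show i < n from hi)), hτ,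
    blockRev_blockRev hi]

theorem exists_bruhatCover_firstSum_le (hj : 1 ≤ j) (hjn : j + 2 ≤ n) {τmax : Perm (Fin n)}
    (hτmax : ∀ i : Fin n, (τmax i : ℕ) = tauMinSeq j (blockRev n j i)) {σ : Perm (Fin n)}
    (hσ : firstSum σ j ≤ j * (j + 1) / 2 + 1) (hne : σ ≠ τmax) :
    ∃ σ', BruhatCover σ σ' ∧ firstSum σ' j ≤ j * (j + 1) / 2 + 1 := by
  by_cases hasc : ∃ i, i + 1 < n ∧ i + 1 ≠ j ∧ oneLine σ i < oneLine σ (i + 1)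
  · obtain ⟨i, hi, hij, h⟩ := hasc
    exact ⟨_, bruhatCover_mul_swap_succ hi h,
      (firstSum_mul_swap_of_iff σ (by simp only; omega)).trans_le hσ⟩
  push Not at hasc
  have hjn' : j ≤ n := by omega
  have hbij := (bijOn_oneLine σ).comp (bijOn_blockRev hjn')
  have hmono := strictMonoOnBlocks_comp_blockRev (bijOn_oneLine σ).injOn hjn' hasc
  have hsum : ∑ i ∈ range j, ((oneLine σ ∘ blockRev n j) i + 1) = firstSum σ j := by
    rw [firstSum_eq_sum_range σ hjn']
    exact sum_range_comp_blockRev fun i => oneLine σ i + 1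
  rcases hσ.lt_or_eq with hlt | heq
  · -- `σ` reverses both blocks, so exchanging its first and last entries `j - 1` and `j`
    -- is a cover crossing the hyperplane
    have hid := eq_self_of_strictMonoOnBlocks hbij hjn' hmono (by rw [hsum]; omega)
    have hfirst := hid (j - 1) (by omega)
    have hlast := hid j (by omega)
    rw [Function.comp_apply, show blockRev n j (j - 1) = 0 by unfold blockRev; split_ifs <;> omega,
      oneLine_of_lt σ (show 0 < n by omega)] at hfirst
    rw [Function.comp_apply, show blockRev n j j = n - 1 by unfold blockRev; split_ifs <;> omega,
      oneLine_of_lt σ (show n - 1 < n by omega)] at hlast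
    set P : Fin n := ⟨0, by omega⟩
    set Q : Fin n := ⟨n - 1, by omega⟩
    refine ⟨_, bruhatCover_mul_swap_of_apply_eq_succ (p := P) (q := Q)
      (Fin.mk_lt_mk.2 (by omega)) (by omega), ?_⟩
    have := firstSum_mul_swap_of_lt_of_le σ (p := P) (q := Q) (show 0 < j by omega)
      (show j ≤ n - 1 by omega)
    omega
  · refine absurd (eq_of_oneLine_blockRev_eq hjn' fun i hi => ?_) hne
    have hmaps : blockRev n j i < n := (bijOn_blockRev hjn').mapsTo (show i < n from hi)
    rw [← Function.comp_apply (f := oneLine σ),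
      eq_tauMinSeq_of_strictMonoOnBlocks hbij hj hjn hmono (hsum.trans heq) i hi,
      oneLine_of_lt τmax hmaps, hτmax, blockRev_blockRev hi]

theorem exists_bruhatCover_le_firstSum (hj : 1 ≤ j) (hjn : j + 2 ≤ n) {τmin : Perm (Fin n)}
    (hτmin : ∀ i : Fin n, (τmin i : ℕ) = tauMinSeq j i) {σ : Perm (Fin n)}
    (hσ : j * (j + 1) / 2 + 1 ≤ firstSum σ j) (hne : σ ≠ τmin) :
    ∃ σ', BruhatCover σ' σ ∧ j * (j + 1) / 2 + 1 ≤ firstSum σ' j := by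
  by_cases hdesc : ∃ i, i + 1 < n ∧ i + 1 ≠ j ∧ oneLine σ (i + 1) < oneLine σ i
  · obtain ⟨i, hi, hij, h⟩ := hdesc
    exact ⟨_, mul_swap_succ_bruhatCover hi h,
      hσ.trans_eq (firstSum_mul_swap_of_iff σ (by simp only; omega)).symm⟩
  push Not at hdesc
  have hjn' : j ≤ n := by omega
  have hmono := strictMonoOnBlocks_of_forall_le (bijOn_oneLine σ).injOn hdesc
  rw [firstSum_eq_sum_range σ hjn'] at hσ
  rcases hσ.lt_or_eq with hlt | heq
  · -- some value `v + 1` of the first block has `v` in the second; exchanging them is a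
    -- cover that lowers the sum by one
    have hmoved : ∃ i < j, oneLine σ i ≠ i := by
      by_contra! h
      rw [sum_congr rfl fun i hi => by rw [h i (mem_range.1 hi)],
        sum_range_succ_id] at hlt
      omega
    obtain ⟨p, hp, q, hjq, hq, hpq⟩ :=
      exists_apply_add_one_eq_of_ne (bijOn_oneLine σ) hjn' hmono hmoved
    rw [oneLine_of_lt σ hq, oneLine_of_lt σ (show p < n by omega)] at hpq
    set P : Fin n := ⟨p, by omega⟩
    set Q : Fin n := ⟨q, hq⟩
    have hcov := bruhatCover_mul_swap_of_apply_eq_succ (σ := σ * swap P Q) (p := P) (q := Q)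
      (Fin.mk_lt_mk.2 (by omega))
      (by simp only [Perm.mul_apply, swap_apply_left, swap_apply_right]; omega)
    rw [mul_swap_mul_self] at hcov
    refine ⟨_, hcov, ?_⟩
    have := firstSum_mul_swap_of_lt_of_le σ (p := P) (q := Q) hp hjq
    rw [firstSum_eq_sum_range σ hjn'] at this
    omega
  · refine absurd (eq_of_oneLine_eq fun i hi => ?_) hne
    rw [eq_tauMinSeq_of_strictMonoOnBlocks (bijOn_oneLine σ) hj hjn hmono heq.symm i hi,
      oneLine_of_lt τmin hi, hτmin]

end Hyperplane

theorem hyperplane_split_into_bruhat_intervals (n j : ℕ) (hj : 1 ≤ j) (hjn : j + 2 ≤ n)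
    (τmin τmax : Equiv.Perm (Fin n))
    (hτmin : ∀ i : Fin n, (τmin i : ℕ) =
      if (i : ℕ) < j - 1 then (i : ℕ)
      else if (i : ℕ) = j - 1 then j
      else if (i : ℕ) = j then j - 1
      else (i : ℕ))
    (hτmax : ∀ i : Fin n, (τmax i : ℕ) =
      if (i : ℕ) = 0 then j
      else if (i : ℕ) < j then j - 1 - (i : ℕ)
      else if (i : ℕ) < n - 1 then n + j - 1 - (i : ℕ)
      else j - 1) :
    {σ : Equiv.Perm (Fin n) | firstSum σ j ≤ j * (j + 1) / 2 + 1} =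
        {σ | BruhatLE 1 σ ∧ BruhatLE σ τmax} ∧
    {σ : Equiv.Perm (Fin n) | j * (j + 1) / 2 + 1 ≤ firstSum σ j} =
        {σ | BruhatLE τmin σ ∧ BruhatLE σ Fin.revPerm} := by
  have hτmax' : ∀ i : Fin n, (τmax i : ℕ) = tauMinSeq j (blockRev n j i) := fun i =>
    (hτmax i).trans (tauMinSeq_blockRev hj i.isLt).symm
  constructor
  · ext σ
    refine ⟨fun hσ => ⟨one_bruhatLE σ, bruhatLE_of_exists_upper_cover
      (fun _ h hne => exists_bruhatCover_firstSum_le hj hjn hτmax' h hne) hσ⟩, fun ⟨_, h⟩ => ?_⟩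
    exact (firstSum_le_of_bruhatLE h j).trans
      (firstSum_eq_of_tauMinSeq_blockRev hj (by omega) hτmax').le
  · ext σ
    refine ⟨fun hσ => ⟨bruhatLE_of_exists_lower_cover
      (fun _ h hne => exists_bruhatCover_le_firstSum hj hjn hτmin h hne) hσ, bruhatLE_revPerm σ⟩,
      fun ⟨h, _⟩ => ?_⟩
    exact (firstSum_eq_of_tauMinSeq hj (by omega) hτmin).ge.trans (firstSum_le_of_bruhatLE h j)
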